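/- Let ℓ ≥ 3 be an integer and n an integer with n ≥ 0. The number of functions η : Fin N → ℤ such that (η, n) ∈ U^(1) and ℓ·n − Σ_{i ∈ Fin N} η(i) ≤ ℓ − 2 equals Σ_{k=2}^{ℓ−1} C(n − (2k+1) + 2ℓ, 2ℓ), where the binomial coefficient C(n − (2k+1) + 2ℓ, 2ℓ) is interpreted as 0 when n − (2k+1) < 0. (This computes the Hilbert function of the cokernel of the map R → ω_R(3), 1 ↦ T^{η_1}, which is the direct sum of the free rank-one modules C_2, …, C_{ℓ−1}; in particular that cokernel is an Ulrich module of multiplicity ℓ−2, whence the Ehrhart ring is almost Gorenstein.) -/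

import Mathlib

/-!
Write `k = ∑ η - ℓ d + ℓ` for the level of `η` and `gᵢ = d - 1 - ηᵢ - ηᵢ₊₁ ≥ 0` for the slacks
of the edge inequalities. Because the cycle has odd length `2ℓ + 1`, `η` is recovered from these
data as `ηᵢ = k + ∑_{j<ℓ} g_{i+2j+1}`, and conversely every level `k` and every `g ≥ 0` with
`∑ g = d - 1 - 2k` arise. The conditions on `η` say exactly `2 ≤ k ≤ ℓ - 1` and `g ≥ 0` (then
`ηᵢ ≥ k ≥ 2`), so for each level one counts the `g : Fin (2ℓ+1) → ℕ` with prescribed sum, which is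
a stars-and-bars binomial coefficient.
-/

/-- `(μ, d)` belongs to `U^(n)` for the cycle of length `2ℓ+1`. -/
def inU (ℓ : ℕ) (n : ℤ) (μ : Fin (2 * ℓ + 1) → ℤ) (d : ℤ) : Prop :=
  (∀ i, n ≤ μ i) ∧
  (∀ i : Fin (2 * ℓ + 1), μ i + μ (i + 1) ≤ d - n) ∧
  (∑ i, μ i ≤ (ℓ : ℤ) * d - n)

open Finset Fin.NatCast Fin.CommRing

lemma Finset.card_piAntidiag_univ_eq_choose {ι : Type*} [Fintype ι] [DecidableEq ι] (m : ℕ) :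
    #(piAntidiag (univ : Finset ι) m) = (Fintype.card ι + m - 1).choose m := by
  rw [← map_sym_eq_piAntidiag, card_map, sym_univ, card_univ, Sym.card_sym_eq_choose]

lemma Finset.sum_range_two_mul {M : Type*} [AddCommMonoid M] (q : ℕ) (h : ℕ → M) :
    ∑ r ∈ range (2 * q), h r = ∑ j ∈ range q, (h (2 * j) + h (2 * j + 1)) := by
  induction q with
  | zero => simp
  | succ q ih =>
    rw [sum_range_succ, ← ih, show 2 * (q + 1) = 2 * q + 1 + 1 by ring, sum_range_succ,
      sum_range_succ, add_assoc]

namespace OddCycle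

variable {ℓ : ℕ}

section Shift

variable {M : Type*} [AddCommMonoid M]

lemma sum_range_add_natCast (g : Fin (2 * ℓ + 1) → M) (i : Fin (2 * ℓ + 1)) :
    ∑ r ∈ range (2 * ℓ + 1), g (i + (r : Fin (2 * ℓ + 1))) = ∑ x, g x := by
  rw [← Fin.sum_univ_eq_sum_range (fun r => g (i + (r : Fin (2 * ℓ + 1))))]
  simp_rw [Fin.cast_val_eq_self]
  exact Equiv.sum_comp (Equiv.addLeft i) g

def oddShiftSum (g : Fin (2 * ℓ + 1) → M) (i : Fin (2 * ℓ + 1)) : M :=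
  ∑ j ∈ range ℓ, g (i + ((2 * j + 1 : ℕ) : Fin (2 * ℓ + 1)))

lemma oddShiftSum_add_oddShiftSum_add_one (g : Fin (2 * ℓ + 1) → M) (i : Fin (2 * ℓ + 1)) :
    oddShiftSum g i + oddShiftSum g (i + 1) + g i = ∑ x, g x := by
  have hshift : ∀ j : ℕ, i + 1 + ((2 * j + 1 : ℕ) : Fin (2 * ℓ + 1)) =
      i + ((2 * j + 1 + 1 : ℕ) : Fin (2 * ℓ + 1)) := by
    intro j
    push_cast
    ring
  rw [oddShiftSum, oddShiftSum, ← sum_range_add_natCast g i, sum_range_succ',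
    sum_range_two_mul, ← sum_add_distrib]
  simp_rw [hshift]
  simp

lemma oddShiftSum_comp_add_one (g : Fin (2 * ℓ + 1) → M) (i : Fin (2 * ℓ + 1)) :
    oddShiftSum (fun x => g (x + 1)) i = oddShiftSum g (i + 1) := by
  simp only [oddShiftSum, add_right_comm _ (1 : Fin (2 * ℓ + 1))]

end Shift

section Slack

variable (d : ℤ)

def slack (η : Fin (2 * ℓ + 1) → ℤ) (i : Fin (2 * ℓ + 1)) : ℤ :=
  d - 1 - η i - η (i + 1)

def level (η : Fin (2 * ℓ + 1) → ℤ) : ℤ :=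
  ∑ i, η i - ℓ * d + ℓ

def reconstruct (k : ℤ) (g : Fin (2 * ℓ + 1) → ℤ) (i : Fin (2 * ℓ + 1)) : ℤ :=
  k + oddShiftSum g i

lemma sum_slack (η : Fin (2 * ℓ + 1) → ℤ) : ∑ i, slack d η i = d - 1 - 2 * level d η := by
  have hshift : ∑ i, η (i + 1) = ∑ i, η i :=
    Fintype.sum_equiv (Equiv.addRight 1) _ _ fun _ => rfl
  simp only [slack, level, sum_sub_distrib, hshift, sum_const, card_univ, Fintype.card_fin,
    nsmul_eq_mul]
  push_cast
  ring

lemma reconstruct_level_slack (η : Fin (2 * ℓ + 1) → ℤ) :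
    reconstruct (level d η) (slack d η) = η := by
  funext i
  have hpair := oddShiftSum_add_oddShiftSum_add_one η i
  have hslack : oddShiftSum (slack d η) i =
      ℓ * (d - 1) - oddShiftSum η i - oddShiftSum η (i + 1) := by
    rw [← oddShiftSum_comp_add_one]
    simp only [slack, oddShiftSum, sum_sub_distrib, sum_const, card_range, nsmul_eq_mul]
    ring
  rw [reconstruct, hslack, level]
  linarith

variable {d}

lemma slack_reconstruct {k : ℤ} {g : Fin (2 * ℓ + 1) → ℤ} (hg : ∑ x, g x = d - 1 - 2 * k) :
    slack d (reconstruct k g) = g := by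
  funext i
  have hpair := oddShiftSum_add_oddShiftSum_add_one g i
  rw [slack, reconstruct, reconstruct]
  linarith

lemma level_reconstruct {k : ℤ} {g : Fin (2 * ℓ + 1) → ℤ} (hg : ∑ x, g x = d - 1 - 2 * k) :
    level d (reconstruct k g) = k := by
  have := sum_slack d (reconstruct k g)
  rw [slack_reconstruct hg] at this
  linarith

lemma inU_one_and_iff (η : Fin (2 * ℓ + 1) → ℤ) :
    (inU ℓ 1 η d ∧ ℓ * d - ∑ i, η i ≤ ℓ - 2) ↔
      2 ≤ level d η ∧ level d η ≤ ℓ - 1 ∧ ∀ i, 0 ≤ slack d η i := by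
  constructor
  · rintro ⟨⟨-, hedge, hsum⟩, hlevel⟩
    exact ⟨by rw [level]; linarith, by rw [level]; linarith,
      fun i => by rw [slack]; linarith [hedge i]⟩
  · rintro ⟨hlevel, hsum, hslack⟩
    have hpos (i : Fin (2 * ℓ + 1)) : 1 ≤ η i := by
      have : 0 ≤ oddShiftSum (slack d η) i := sum_nonneg fun j _ => hslack _
      rw [← reconstruct_level_slack d η, reconstruct]
      linarith
    simp only [level, slack] at hlevel hsum hslack
    exact ⟨⟨hpos, fun i => by linarith [hslack i], by linarith⟩, by linarith⟩

end Slack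

section Count

variable {n : ℕ}

-- The filter matters: `n - (2 * k + 1)` truncates to `0` in `ℕ`.
variable (ℓ n) in
def levelSlackData : Finset (Σ _ : ℕ, Fin (2 * ℓ + 1) → ℕ) :=
  {k ∈ Icc 2 (ℓ - 1) | 2 * k + 1 ≤ n}.sigma fun k => piAntidiag univ (n - (2 * k + 1))

def reconstructNat (p : Σ _ : ℕ, Fin (2 * ℓ + 1) → ℕ) : Fin (2 * ℓ + 1) → ℤ :=
  reconstruct p.1 fun i => (p.2 i : ℤ)

lemma mem_levelSlackData {p : Σ _ : ℕ, Fin (2 * ℓ + 1) → ℕ} :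
    p ∈ levelSlackData ℓ n ↔
      (2 ≤ p.1 ∧ p.1 ≤ ℓ - 1) ∧ 2 * p.1 + 1 ≤ n ∧ ∑ i, p.2 i = n - (2 * p.1 + 1) := by
  simp [levelSlackData, and_assoc]

lemma sum_natCast_of_mem_levelSlackData {p : Σ _ : ℕ, Fin (2 * ℓ + 1) → ℕ}
    (hp : p ∈ levelSlackData ℓ n) : ∑ i, (p.2 i : ℤ) = n - 1 - 2 * p.1 := by
  obtain ⟨-, hn, hsum⟩ := mem_levelSlackData.1 hp
  rw [← Nat.cast_sum, hsum, Nat.cast_sub hn]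
  push_cast
  ring

lemma injOn_reconstructNat :
    Set.InjOn reconstructNat (levelSlackData ℓ n : Set (Σ _ : ℕ, Fin (2 * ℓ + 1) → ℕ)) := by
  rintro ⟨k, g⟩ hp ⟨k', g'⟩ hq h
  have hsum := sum_natCast_of_mem_levelSlackData hp
  have hsum' := sum_natCast_of_mem_levelSlackData hq
  have hk : (k : ℤ) = k' := by
    rw [← level_reconstruct hsum, ← level_reconstruct hsum']
    exact congrArg (level n) h
  obtain rfl : k = k' := by exact_mod_cast hk
  have hg : (fun i => (g i : ℤ)) = fun i => (g' i : ℤ) := by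
    rw [← slack_reconstruct hsum, ← slack_reconstruct hsum']
    exact congrArg (slack n) h
  obtain rfl : g = g' := funext fun i => by exact_mod_cast congrFun hg i
  rfl

lemma image_reconstructNat :
    reconstructNat '' (levelSlackData ℓ n : Set (Σ _ : ℕ, Fin (2 * ℓ + 1) → ℕ)) =
      {η | 2 ≤ level n η ∧ level n η ≤ ℓ - 1 ∧ ∀ i, 0 ≤ slack n η i} := by
  ext η
  constructor
  · rintro ⟨⟨k, g⟩, hp, rfl⟩
    have hsum := sum_natCast_of_mem_levelSlackData hp
    obtain ⟨⟨hlo, hhi⟩, -⟩ := mem_levelSlackData.1 hp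
    rw [Set.mem_ofPred_eq, reconstructNat, level_reconstruct hsum, slack_reconstruct hsum]
    exact ⟨by exact_mod_cast hlo, by omega, fun i => Int.natCast_nonneg _⟩
  · rintro ⟨hlo, hhi, hslack⟩
    have hsum := sum_slack n η
    have hsum_nonneg : 0 ≤ ∑ i, slack n η i := sum_nonneg fun i _ => hslack i
    have hcast : ((∑ i, (slack n η i).toNat : ℕ) : ℤ) = ∑ i, slack n η i := by
      push_cast
      exact sum_congr rfl fun i _ => Int.toNat_of_nonneg (hslack i)
    refine ⟨⟨(level n η).toNat, fun i => (slack n η i).toNat⟩, ?_, ?_⟩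
    · rw [mem_coe, mem_levelSlackData]
      dsimp only
      omega
    · simp only [reconstructNat, Int.toNat_of_nonneg (hslack _),
        Int.toNat_of_nonneg (by omega : 0 ≤ level n η)]
      exact reconstruct_level_slack n η

lemma card_levelSlackData :
    #(levelSlackData ℓ n) = ∑ k ∈ Icc 2 (ℓ - 1),
      if 2 * k + 1 ≤ n then (n - (2 * k + 1) + 2 * ℓ).choose (2 * ℓ) else 0 := by
  have hchoose (m : ℕ) : (2 * ℓ + 1 + m - 1).choose m = (m + 2 * ℓ).choose (2 * ℓ) := by
    rw [show 2 * ℓ + 1 + m - 1 = m + 2 * ℓ by omega, Nat.choose_symm_add]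
  rw [levelSlackData, card_sigma, sum_filter]
  simp only [card_piAntidiag_univ_eq_choose, Fintype.card_fin, hchoose]

end Count

end OddCycle

theorem stmt_15_general (ℓ : ℕ) (n : ℕ) :
    {η : Fin (2 * ℓ + 1) → ℤ |
      inU ℓ 1 η (n : ℤ) ∧ (ℓ : ℤ) * (n : ℤ) - ∑ i, η i ≤ (ℓ : ℤ) - 2}.ncard =
      ∑ k ∈ Finset.Icc 2 (ℓ - 1),
        if 2 * k + 1 ≤ n then Nat.choose (n - (2 * k + 1) + 2 * ℓ) (2 * ℓ) else 0 := by
  simp_rw [OddCycle.inU_one_and_iff]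
  rw [← OddCycle.image_reconstructNat, OddCycle.injOn_reconstructNat.ncard_image,
    Set.ncard_coe_finset, OddCycle.card_levelSlackData]

theorem stmt_15 (ℓ : ℕ) (hℓ : 3 ≤ ℓ) (n : ℕ) :
    {η : Fin (2 * ℓ + 1) → ℤ |
      inU ℓ 1 η (n : ℤ) ∧ (ℓ : ℤ) * (n : ℤ) - ∑ i, η i ≤ (ℓ : ℤ) - 2}.ncard =
      ∑ k ∈ Finset.Icc 2 (ℓ - 1),
        if 2 * k + 1 ≤ n then Nat.choose (n - (2 * k + 1) + 2 * ℓ) (2 * ℓ) else 0 :=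
  stmt_15_general ℓ n
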